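/- Let γ : I → ℝ be twice continuously differentiable with 1+γ(θ) > 0 on I, and let ℘_γ ∈ C(I) be defined by the identity 𝔽(γ, ℘_γ) = 0. Then for every twice continuously differentiable h : I → ℝ and every θ ∈ I the limit lim_{t→0} (𝔽(γ + t·h, ℘_γ)(θ) − 𝔽(γ, ℘_γ)(θ))/t exists and equals τ₁(θ)·h''(θ) + τ₂(θ)·h'(θ) + τ₃(θ)·h(θ), where τ₁(θ) = (σ/(R·P_atm))·(1+γ(θ))/((1+γ(θ))² + γ'(θ)²)^{3/2} (which is everywhere positive) and τ₂, τ₃ : I → ℝ are continuous functions determined by γ, ρ, F and the constants, independent of h. -/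

import Mathlib

/-- The equatorial strip `I = [π/2 − ε, π/2 + ε]` with `ε = 0.016`. -/
noncomputable def Istrip : Set ℝ :=
  Set.Icc (Real.pi / 2 - 0.016) (Real.pi / 2 + 0.016)

/-- The characteristic curve `s ↦ θ̄(s)`. -/
noncomputable def thetaBar (s : ℝ) : ℝ :=
  Real.arccos ((1 - Real.exp (2 * s)) / (1 + Real.exp (2 * s)))

/-- The function `f(θ) = ½·ln((1−cos θ)/(1+cos θ))`. -/
noncomputable def fChar (θ : ℝ) : ℝ :=
  (1 / 2) * Real.log ((1 - Real.cos θ) / (1 + Real.cos θ))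

/-- `𝓕(ξ,θ) = ∫₀^{f(θ)} g·ρ_θ(ξ·(e^s+e^{−s})/2, θ̄(s)) ds`. -/
noncomputable def calF (g : ℝ) (ρθ : ℝ → ℝ → ℝ) (ξ θ : ℝ) : ℝ :=
  ∫ s in (0:ℝ)..(fChar θ),
    g * ρθ (ξ * (Real.exp s + Real.exp (-s)) / 2) (thetaBar s)

/-- The nondimensionalized Bernoulli functional `𝔽(h,℘)(θ)`. -/
noncomputable def FF (g R σ Patm a b : ℝ) (ρ ρθ : ℝ → ℝ → ℝ) (F : ℝ → ℝ)
    (h ℘ : ℝ → ℝ) (θ : ℝ) : ℝ :=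
  -℘ θ - (g / Patm) * (∫ s in a..(R * (1 + h θ)), ρ s θ)
    + (1 / Patm) *
        (∫ s in (a * Real.sin θ)..(R * (1 + h θ) * Real.sin θ),
          (F s / s + calF g ρθ s θ))
    - (σ / (R * Patm)) *
        ((2 * (1 + h θ)^2 + 3 * (deriv h θ)^2) /
            (((1 + h θ)^2 + (deriv h θ)^2) ^ ((3:ℝ)/2))
          - deriv (deriv h) θ * (1 + h θ) /
            (((1 + h θ)^2 + (deriv h θ)^2) ^ ((3:ℝ)/2))
          - Real.cot θ * deriv h θ /
            ((1 + h θ) * (((1 + h θ)^2 + (deriv h θ)^2) ^ ((1:ℝ)/2))))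
    + (b / Patm + (1 / Patm) *
        ∫ s in (Real.pi / 2)..θ,
          (F (a * Real.sin s) * Real.cot s
            + calF g ρθ (a * Real.sin s) s * a * Real.cos s))

/-!
At a fixed angle `θ`, `𝔽(γ + t h, ℘)(θ)` depends on `t` only through the jet
`(γ + t h)(θ), (γ + t h)'(θ), (γ + t h)''(θ)`, which moves along a line. The two integral terms
depend on the first entry alone, through their upper limits, and are differentiated by the
fundamental theorem of calculus. The curvature bracket is a smooth function of
`(cot θ, u, v, w)` on `{1 + u > 0}`, so its directional derivative is linear in `(h, h', h'')`
with coefficients continuous in `θ`; being affine in `w`, it yields `τ₁` explicitly. The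
coefficients are continuous because `ρ_θ` is (as `ρ` is `C²`), hence so is `𝓕`, a parametric
integral with continuous integrand and continuous upper limit `f(θ)`.
-/

open Set Filter Topology

theorem ContDiffOn.continuousOn_of_hasDerivAt_snd {E F : Type*} [NormedAddCommGroup E]
    [NormedSpace ℝ E] [NormedAddCommGroup F] [NormedSpace ℝ F] {f f' : E × ℝ → F}
    {U : Set (E × ℝ)} (hf : ContDiffOn ℝ 1 f U) (hU : IsOpen U)
    (hf' : ∀ q ∈ U, HasDerivAt (fun y => f (q.1, y)) (f' q) q.2) :
    ContinuousOn f' U := by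
  have hfderiv : ∀ q ∈ U, f' q = fderiv ℝ f q (0, 1) := by
    intro q hq
    have hline : HasDerivAt (fun y : ℝ => (q.1, y)) ((0 : E), (1 : ℝ)) q.2 :=
      (hasDerivAt_const _ _).prodMk (hasDerivAt_id _)
    exact (hf' q hq).unique
      (((hf.differentiableOn one_ne_zero).differentiableAt (hU.mem_nhds hq)).hasFDerivAt
        |>.comp_hasDerivAt q.2 hline)
  refine ContinuousOn.congr ?_ hfderiv
  exact (ContinuousLinearMap.apply ℝ F ((0 : E), (1 : ℝ))).continuous.comp_continuousOn
    (hf.continuousOn_fderiv_of_isOpen hU le_rfl)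

theorem continuousOn_parametric_intervalIntegral {X E : Type*} [TopologicalSpace X]
    [NormedAddCommGroup E] [NormedSpace ℝ E] {f : X → ℝ → E} {S : Set X}
    (hf : ContinuousOn (Function.uncurry f) (S ×ˢ univ)) {ℓ : X → ℝ} (hℓ : ContinuousOn ℓ S)
    (a₀ : ℝ) : ContinuousOn (fun x => ∫ t in a₀..ℓ x, f x t) S := by
  rw [continuousOn_iff_continuous_domRestrict] at hℓ ⊢
  exact intervalIntegral.continuous_parametric_intervalIntegral_of_continuous
    (f := fun (x : S) t => f x t)
    (hf.comp_continuous (f := fun p : S × ℝ => ((p.1 : X), p.2)) (by fun_prop)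
      fun p => ⟨p.1.2, trivial⟩) hℓ

theorem hasDerivAt_intervalIntegral_of_hasDerivAt_upper {f ℓ : ℝ → ℝ} {U : Set ℝ}
    {a ℓ' t : ℝ} (hU : IsOpen U) (hf : ContinuousOn f U) (hsub : uIcc a (ℓ t) ⊆ U)
    (hℓ : HasDerivAt ℓ ℓ' t) :
    HasDerivAt (fun t => ∫ s in a..ℓ t, f s) (f (ℓ t) * ℓ') t := by
  have hℓU : ℓ t ∈ U := hsub right_mem_uIcc
  exact (intervalIntegral.integral_hasDerivAt_right ((hf.mono hsub).intervalIntegrable)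
    (hf.stronglyMeasurableAtFilter hU _ hℓU) (hf.continuousAt (hU.mem_nhds hℓU))).comp t hℓ

theorem deriv_add_const_mul {f g : ℝ → ℝ} (hf : Differentiable ℝ f) (hg : Differentiable ℝ g)
    (t : ℝ) : deriv (fun x => f x + t * g x) = fun x => deriv f x + t * deriv g x := by
  ext x
  exact ((hf x).hasDerivAt.add ((hg x).hasDerivAt.const_mul t)).deriv

theorem DifferentiableAt.hasDerivAt_add_smul {E : Type*} [NormedAddCommGroup E]
    [NormedSpace ℝ E] {Φ : E → ℝ} {x : E} (hΦ : DifferentiableAt ℝ Φ x) (y : E) :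
    HasDerivAt (fun t : ℝ => Φ (x + t • y)) (fderiv ℝ Φ x y) 0 := by
  have hline : HasDerivAt (fun t : ℝ => x + t • y) y 0 := by
    simpa using ((hasDerivAt_id (0 : ℝ)).smul_const y).const_add x
  exact hΦ.hasFDerivAt.comp_hasDerivAt_of_eq 0 hline (by simp)

theorem ContinuousLinearMap.apply_mk_eq_sum {M : Type*} [AddCommGroup M] [Module ℝ M]
    [TopologicalSpace M] (L : ℝ × ℝ × ℝ × ℝ →L[ℝ] M) (c u v w : ℝ) :
    L (c, u, v, w) = c • L (1, 0, 0, 0) + u • L (0, 1, 0, 0) + v • L (0, 0, 1, 0)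
      + w • L (0, 0, 0, 1) := by
  simp only [← map_smul, ← map_add]
  congr 1
  ext <;> simp

theorem Real.continuousOn_cot_Ioo : ContinuousOn Real.cot (Ioo 0 Real.pi) := by
  rw [show Real.cot = fun θ => Real.cos θ / Real.sin θ from funext Real.cot_eq_cos_div_sin]
  exact Real.continuous_cos.continuousOn.div Real.continuous_sin.continuousOn
    fun θ hθ => (Real.sin_pos_of_pos_of_lt_pi hθ.1 hθ.2).ne'

theorem Istrip_subset_Ioo : Istrip ⊆ Ioo 0 Real.pi := by
  rintro θ ⟨h₁, h₂⟩
  have := Real.pi_gt_three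
  constructor <;> linarith

theorem thetaBar_mem_Ioo (s : ℝ) : thetaBar s ∈ Ioo 0 Real.pi := by
  have he := Real.exp_pos (2 * s)
  refine ⟨Real.arccos_pos.2 ?_, Real.arccos_lt_pi.2 ?_⟩
  · rw [div_lt_one (by positivity)]; linarith
  · rw [lt_div_iff₀ (by positivity)]; linarith

@[fun_prop]
theorem continuous_thetaBar : Continuous thetaBar := by
  unfold thetaBar
  fun_prop (disch := intro; positivity)

theorem continuousOn_fChar : ContinuousOn fChar (Ioo 0 Real.pi) := by
  intro θ hθ
  have h₁ : -1 < Real.cos θ := by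
    simpa using Real.cos_lt_cos_of_nonneg_of_le_pi hθ.1.le le_rfl hθ.2
  have h₂ : Real.cos θ < 1 := by
    simpa using Real.cos_lt_cos_of_nonneg_of_le_pi le_rfl hθ.2.le hθ.1
  have h₃ : 0 < 1 + Real.cos θ := by linarith
  have h₄ : 0 < (1 - Real.cos θ) / (1 + Real.cos θ) := div_pos (by linarith) h₃
  apply ContinuousAt.continuousWithinAt
  unfold fChar
  fun_prop (disch := first | exact h₃.ne' | exact h₄.ne')

theorem continuousOn_calF (g : ℝ) {ρθ : ℝ → ℝ → ℝ}
    (hρθ : ContinuousOn (fun q : ℝ × ℝ => ρθ q.1 q.2) (Ioi 0 ×ˢ Ioo 0 Real.pi)) :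
    ContinuousOn (fun q : ℝ × ℝ => calF g ρθ q.1 q.2) (Ioi 0 ×ˢ Ioo 0 Real.pi) := by
  have hintegrand : ContinuousOn
      (Function.uncurry fun (q : ℝ × ℝ) (s : ℝ) =>
        g * ρθ (q.1 * (Real.exp s + Real.exp (-s)) / 2) (thetaBar s))
      ((Ioi 0 ×ˢ Ioo 0 Real.pi) ×ˢ univ) := by
    refine continuousOn_const.mul (hρθ.comp (Continuous.continuousOn (by fun_prop) :
      ContinuousOn (fun p : (ℝ × ℝ) × ℝ =>
        (p.1.1 * (Real.exp p.2 + Real.exp (-p.2)) / 2, thetaBar p.2)) _) ?_)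
    rintro ⟨⟨ξ, θ⟩, s⟩ ⟨⟨hξ, -⟩, -⟩
    exact ⟨by simp only [mem_Ioi] at hξ ⊢; positivity, thetaBar_mem_Ioo s⟩
  exact continuousOn_parametric_intervalIntegral hintegrand
    (continuousOn_fChar.comp continuousOn_snd fun q hq => hq.2) 0

/-- The surface-tension bracket of `FF`, as a function of `(cot θ, h θ, h' θ, h'' θ)`. -/
noncomputable def curvatureTerm : ℝ × ℝ × ℝ × ℝ → ℝ
  | (c, u, v, w) =>
    (2 * (1 + u) ^ 2 + 3 * v ^ 2) / (((1 + u) ^ 2 + v ^ 2) ^ ((3:ℝ)/2))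
      - w * (1 + u) / (((1 + u) ^ 2 + v ^ 2) ^ ((3:ℝ)/2))
      - c * v / ((1 + u) * (((1 + u) ^ 2 + v ^ 2) ^ ((1:ℝ)/2)))

theorem contDiffOn_curvatureTerm {n : WithTop ℕ∞} :
    ContDiffOn ℝ n curvatureTerm {x | 0 < 1 + x.2.1} := by
  rintro ⟨c, u, v, w⟩ (hu : 0 < 1 + u)
  have hD : 0 < (1 + u) ^ 2 + v ^ 2 := by positivity
  refine ContDiffAt.contDiffWithinAt ?_
  show ContDiffAt ℝ n (fun x : ℝ × ℝ × ℝ × ℝ =>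
    (2 * (1 + x.2.1) ^ 2 + 3 * x.2.2.1 ^ 2) / (((1 + x.2.1) ^ 2 + x.2.2.1 ^ 2) ^ ((3:ℝ)/2))
      - x.2.2.2 * (1 + x.2.1) / (((1 + x.2.1) ^ 2 + x.2.2.1 ^ 2) ^ ((3:ℝ)/2))
      - x.1 * x.2.2.1 / ((1 + x.2.1) * (((1 + x.2.1) ^ 2 + x.2.2.1 ^ 2) ^ ((1:ℝ)/2)))) _
  fun_prop (disch := first | positivity | exact hD.ne' | exact hu.ne')

theorem differentiableAt_curvatureTerm {x : ℝ × ℝ × ℝ × ℝ} (hx : 0 < 1 + x.2.1) :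
    DifferentiableAt ℝ curvatureTerm x :=
  ((contDiffOn_curvatureTerm (n := 1)).differentiableOn one_ne_zero).differentiableAt
    ((isOpen_lt continuous_const (by fun_prop)).mem_nhds hx)

theorem continuousOn_fderiv_curvatureTerm_comp {X : Type*} [TopologicalSpace X] {S : Set X}
    {x : X → ℝ × ℝ × ℝ × ℝ} (hx : ContinuousOn x S) (hxpos : ∀ θ ∈ S, 0 < 1 + (x θ).2.1)
    (y : ℝ × ℝ × ℝ × ℝ) : ContinuousOn (fun θ => fderiv ℝ curvatureTerm (x θ) y) S :=
  (ContinuousLinearMap.apply ℝ ℝ y).continuous.comp_continuousOn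
    ((contDiffOn_curvatureTerm (n := 1)).continuousOn_fderiv_of_isOpen
      (isOpen_lt continuous_const (by fun_prop)) le_rfl |>.comp hx hxpos)

theorem fderiv_curvatureTerm_apply_w {c u v w : ℝ} (hu : 0 < 1 + u) :
    fderiv ℝ curvatureTerm (c, u, v, w) (0, 0, 0, 1)
      = -(1 + u) / (((1 + u) ^ 2 + v ^ 2) ^ ((3:ℝ)/2)) := by
  have hline := (differentiableAt_curvatureTerm (x := (c, u, v, w)) hu).hasDerivAt_add_smul
    (0, 0, 0, 1)
  have haffine : (fun t : ℝ => curvatureTerm ((c, u, v, w) + t • (0, 0, 0, 1))) = fun t =>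
      curvatureTerm (c, u, v, w) + t * (-(1 + u) / (((1 + u) ^ 2 + v ^ 2) ^ ((3:ℝ)/2))) := by
    ext t
    simp only [Prod.smul_mk, smul_eq_mul, mul_zero, mul_one, add_zero,
      curvatureTerm]
    ring
  rw [haffine] at hline
  exact hline.unique ((hasDerivAt_mul_const _).const_add _)

section Bernoulli

variable (g R σ Patm a : ℝ) (ρ ρθ : ℝ → ℝ → ℝ) (F : ℝ → ℝ)

/-- The two integral terms of `FF`, as a function of `θ` and `u = h θ`. -/
noncomputable def hydrostaticTerm (θ u : ℝ) : ℝ :=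
  -(g / Patm) * (∫ s in a..(R * (1 + u)), ρ s θ)
    + (1 / Patm) *
        ∫ s in (a * Real.sin θ)..(R * (1 + u) * Real.sin θ), (F s / s + calF g ρθ s θ)

noncomputable def hydrostaticTermDeriv (θ u : ℝ) : ℝ :=
  -(g / Patm) * (ρ (R * (1 + u)) θ * R)
    + (1 / Patm) * ((F (R * (1 + u) * Real.sin θ) / (R * (1 + u) * Real.sin θ)
        + calF g ρθ (R * (1 + u) * Real.sin θ) θ) * (R * Real.sin θ))

theorem FF_sub_FF (b : ℝ) (h k ℘ : ℝ → ℝ) (θ : ℝ) :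
    FF g R σ Patm a b ρ ρθ F h ℘ θ - FF g R σ Patm a b ρ ρθ F k ℘ θ
      = hydrostaticTerm g R Patm a ρ ρθ F θ (h θ) - hydrostaticTerm g R Patm a ρ ρθ F θ (k θ)
        - σ / (R * Patm) *
          (curvatureTerm (Real.cot θ, h θ, deriv h θ, deriv (deriv h) θ)
            - curvatureTerm (Real.cot θ, k θ, deriv k θ, deriv (deriv k) θ)) := by
  simp only [FF, hydrostaticTerm, curvatureTerm]
  ring

variable {g R Patm a ρ ρθ F}

theorem hasDerivAt_hydrostaticTerm {θ u : ℝ} (hR : 0 < R) (ha : 0 < a)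
    (hρ : ContinuousOn (fun q : ℝ × ℝ => ρ q.1 q.2) (Ioi 0 ×ˢ Ioo 0 Real.pi))
    (hρθ : ContinuousOn (fun q : ℝ × ℝ => ρθ q.1 q.2) (Ioi 0 ×ˢ Ioo 0 Real.pi))
    (hF : ContinuousOn F (Ioi 0)) (hθ : θ ∈ Ioo 0 Real.pi) (hu : 0 < 1 + u) :
    HasDerivAt (hydrostaticTerm g R Patm a ρ ρθ F θ)
      (hydrostaticTermDeriv g R Patm ρ ρθ F θ u) u := by
  have hsin : 0 < Real.sin θ := Real.sin_pos_of_pos_of_lt_pi hθ.1 hθ.2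
  have hslice : MapsTo (fun s : ℝ => (s, θ)) (Ioi 0) (Ioi 0 ×ˢ Ioo 0 Real.pi) :=
    fun _ hs => ⟨hs, hθ⟩
  have hρs : ContinuousOn (fun s => ρ s θ) (Ioi 0) :=
    hρ.comp (continuousOn_id.prodMk continuousOn_const) hslice
  have hG : ContinuousOn (fun s => F s / s + calF g ρθ s θ) (Ioi 0) :=
    (hF.div continuousOn_id fun _ hs => ne_of_gt hs).add
      (ContinuousOn.comp (g := fun q : ℝ × ℝ => calF g ρθ q.1 q.2) (f := fun s => (s, θ))
        (continuousOn_calF g hρθ) (continuousOn_id.prodMk continuousOn_const) hslice)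
  have hℓ : HasDerivAt (fun u => R * (1 + u)) R u := by
    simpa using ((hasDerivAt_id u).const_add 1).const_mul R
  have hℓpos : 0 < R * (1 + u) := mul_pos hR hu
  have hsub : ∀ {x y : ℝ}, 0 < x → 0 < y → uIcc x y ⊆ Ioi 0 :=
    fun hx hy s hs => (lt_min hx hy).trans_le hs.1
  have hρint := hasDerivAt_intervalIntegral_of_hasDerivAt_upper (ℓ := fun u => R * (1 + u))
    isOpen_Ioi hρs (hsub ha hℓpos) hℓ
  have hGint := hasDerivAt_intervalIntegral_of_hasDerivAt_upper
    (ℓ := fun u => R * (1 + u) * Real.sin θ) isOpen_Ioi hG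
    (hsub (mul_pos ha hsin) (mul_pos hℓpos hsin)) (hℓ.mul_const (Real.sin θ))
  unfold hydrostaticTerm hydrostaticTermDeriv
  exact (hρint.const_mul _).add (hGint.const_mul _)

theorem continuousOn_hydrostaticTermDeriv_comp {S : Set ℝ} {γ : ℝ → ℝ} (hR : 0 < R)
    (hρ : ContinuousOn (fun q : ℝ × ℝ => ρ q.1 q.2) (Ioi 0 ×ˢ Ioo 0 Real.pi))
    (hρθ : ContinuousOn (fun q : ℝ × ℝ => ρθ q.1 q.2) (Ioi 0 ×ˢ Ioo 0 Real.pi))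
    (hF : ContinuousOn F (Ioi 0)) (hS : S ⊆ Ioo 0 Real.pi) (hγ : ContinuousOn γ S)
    (hγpos : ∀ θ ∈ S, 0 < 1 + γ θ) :
    ContinuousOn (fun θ => hydrostaticTermDeriv g R Patm ρ ρθ F θ (γ θ)) S := by
  have hsin : ∀ θ ∈ S, 0 < Real.sin θ := fun θ hθ =>
    Real.sin_pos_of_pos_of_lt_pi (hS hθ).1 (hS hθ).2
  have hr : ContinuousOn (fun θ => R * (1 + γ θ)) S := continuousOn_const.mul
    (continuousOn_const.add hγ)
  have hm : ContinuousOn (fun θ => R * (1 + γ θ) * Real.sin θ) S :=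
    hr.mul Real.continuous_sin.continuousOn
  have hmpos : ∀ θ ∈ S, 0 < R * (1 + γ θ) * Real.sin θ := fun θ hθ =>
    mul_pos (mul_pos hR (hγpos θ hθ)) (hsin θ hθ)
  have hρr : ContinuousOn (fun θ => ρ (R * (1 + γ θ)) θ) S :=
    hρ.comp (hr.prodMk continuousOn_id) fun θ hθ => ⟨mul_pos hR (hγpos θ hθ), hS hθ⟩
  have hFm : ContinuousOn (fun θ => F (R * (1 + γ θ) * Real.sin θ)) S :=
    hF.comp hm hmpos
  have hcalFm : ContinuousOn (fun θ => calF g ρθ (R * (1 + γ θ) * Real.sin θ) θ) S :=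
    ContinuousOn.comp (g := fun q : ℝ × ℝ => calF g ρθ q.1 q.2)
      (f := fun θ => (R * (1 + γ θ) * Real.sin θ, θ)) (continuousOn_calF g hρθ)
      (hm.prodMk continuousOn_id) fun θ hθ => ⟨hmpos θ hθ, hS hθ⟩
  unfold hydrostaticTermDeriv
  exact (continuousOn_const.mul (hρr.mul continuousOn_const)).add
    (continuousOn_const.mul (((hFm.div hm fun θ hθ => (hmpos θ hθ).ne').add hcalFm).mul
      (continuousOn_const.mul Real.continuous_sin.continuousOn)))

theorem tendsto_slope_FF (b : ℝ) {γ h ℘ : ℝ → ℝ} {θ : ℝ} (hR : 0 < R) (ha : 0 < a)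
    (hρ : ContinuousOn (fun q : ℝ × ℝ => ρ q.1 q.2) (Ioi 0 ×ˢ Ioo 0 Real.pi))
    (hρθ : ContinuousOn (fun q : ℝ × ℝ => ρθ q.1 q.2) (Ioi 0 ×ˢ Ioo 0 Real.pi))
    (hF : ContinuousOn F (Ioi 0)) (hγ : ContDiff ℝ 2 γ) (hh : ContDiff ℝ 2 h)
    (hθ : θ ∈ Ioo 0 Real.pi) (hγpos : 0 < 1 + γ θ) :
    Tendsto (fun t : ℝ =>
        (FF g R σ Patm a b ρ ρθ F (fun x => γ x + t * h x) ℘ θ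
          - FF g R σ Patm a b ρ ρθ F γ ℘ θ) / t) (𝓝[≠] 0)
      (𝓝 (hydrostaticTermDeriv g R Patm ρ ρθ F θ (γ θ) * h θ
        - σ / (R * Patm) * fderiv ℝ curvatureTerm
            (Real.cot θ, γ θ, deriv γ θ, deriv (deriv γ) θ)
            (0, h θ, deriv h θ, deriv (deriv h) θ))) := by
  set x : ℝ × ℝ × ℝ × ℝ := (Real.cot θ, γ θ, deriv γ θ, deriv (deriv γ) θ)
  set y : ℝ × ℝ × ℝ × ℝ := (0, h θ, deriv h θ, deriv (deriv h) θ)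
  set Φ : ℝ → ℝ := fun t => hydrostaticTerm g R Patm a ρ ρθ F θ (γ θ + t * h θ)
    - σ / (R * Patm) * curvatureTerm (x + t • y)
  have hγ' : ContDiff ℝ 1 (deriv γ) := hγ.deriv'
  have hh' : ContDiff ℝ 1 (deriv h) := hh.deriv'
  have hjet : ∀ t : ℝ, FF g R σ Patm a b ρ ρθ F (fun x => γ x + t * h x) ℘ θ
      - FF g R σ Patm a b ρ ρθ F γ ℘ θ = Φ t - Φ 0 := by
    intro t
    rw [FF_sub_FF, deriv_add_const_mul (hγ.differentiable two_ne_zero)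
      (hh.differentiable two_ne_zero), deriv_add_const_mul (hγ'.differentiable one_ne_zero)
      (hh'.differentiable one_ne_zero)]
    simp only [Φ, x, y, Prod.smul_mk, Prod.mk_add_mk, smul_eq_mul, mul_zero, add_zero, zero_mul]
    ring
  have hline : HasDerivAt (fun t : ℝ => γ θ + t * h θ) (h θ) 0 := by
    simpa using (hasDerivAt_mul_const (h θ)).const_add (γ θ)
  have hΦ : HasDerivAt Φ (hydrostaticTermDeriv g R Patm ρ ρθ F θ (γ θ) * h θ
      - σ / (R * Patm) * fderiv ℝ curvatureTerm x y) 0 := by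
    refine HasDerivAt.sub ?_ (((differentiableAt_curvatureTerm hγpos).hasDerivAt_add_smul
      y).const_mul _)
    exact (hasDerivAt_hydrostaticTerm hR ha hρ hρθ hF hθ hγpos).comp_of_eq 0 hline (by simp)
  refine hΦ.tendsto_slope.congr fun t => ?_
  rw [slope_def_field, hjet, sub_zero]

end Bernoulli

theorem gateaux_derivative_of_bernoulli_functional_general
    (g R σ Patm a b : ℝ)
    (hR : 0 < R) (hσ : 0 < σ) (hP : 0 < Patm) (ha : 0 < a)
    (ρ ρθ : ℝ → ℝ → ℝ)
    (hρ : ContDiffOn ℝ 2 (fun q : ℝ × ℝ => ρ q.1 q.2)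
      (Set.Ioi 0 ×ˢ Set.Ioo 0 Real.pi))
    (hρθ : ∀ r ∈ Set.Ioi (0:ℝ), ∀ t ∈ Set.Ioo 0 Real.pi,
      HasDerivAt (fun u => ρ r u) (ρθ r t) t)
    (F : ℝ → ℝ) (hF : ContDiffOn ℝ 1 F (Set.Ioi 0))
    (γ : ℝ → ℝ) (hγ : ContDiff ℝ 2 γ)
    (hγpos : ∀ θ ∈ Istrip, 0 < 1 + γ θ)
    (℘γ : ℝ → ℝ) :
    ∃ τ₂ τ₃ : ℝ → ℝ, ContinuousOn τ₂ Istrip ∧ ContinuousOn τ₃ Istrip ∧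
      (∀ θ ∈ Istrip,
        0 < σ / (R * Patm) * (1 + γ θ) /
          (((1 + γ θ)^2 + (deriv γ θ)^2) ^ ((3:ℝ)/2))) ∧
      (∀ h : ℝ → ℝ, ContDiff ℝ 2 h → ∀ θ ∈ Istrip,
        Filter.Tendsto
          (fun t : ℝ =>
            (FF g R σ Patm a b ρ ρθ F (fun x => γ x + t * h x) ℘γ θ
              - FF g R σ Patm a b ρ ρθ F γ ℘γ θ) / t)
          (nhdsWithin (0:ℝ) {(0:ℝ)}ᶜ)
          (nhds (σ / (R * Patm) * (1 + γ θ) /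
              (((1 + γ θ)^2 + (deriv γ θ)^2) ^ ((3:ℝ)/2)) * deriv (deriv h) θ
            + τ₂ θ * deriv h θ + τ₃ θ * h θ))) := by
  have hρc := hρ.continuousOn
  have hρθc := (hρ.of_le one_le_two).continuousOn_of_hasDerivAt_snd
    (isOpen_Ioi.prod isOpen_Ioo) fun q hq => hρθ q.1 hq.1 q.2 hq.2
  set jet : ℝ → ℝ × ℝ × ℝ × ℝ := fun θ => (Real.cot θ, γ θ, deriv γ θ, deriv (deriv γ) θ)
  have hjet : ContinuousOn jet Istrip :=
    (Real.continuousOn_cot_Ioo.mono Istrip_subset_Ioo).prodMk (hγ.continuous.prodMk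
      ((hγ.continuous_deriv one_le_two).prodMk (hγ.deriv'.continuous_deriv le_rfl))).continuousOn
  refine ⟨fun θ => -(σ / (R * Patm)) * fderiv ℝ curvatureTerm (jet θ) (0, 0, 1, 0),
    fun θ => hydrostaticTermDeriv g R Patm ρ ρθ F θ (γ θ)
      - σ / (R * Patm) * fderiv ℝ curvatureTerm (jet θ) (0, 1, 0, 0), ?_, ?_, ?_, ?_⟩
  · exact continuousOn_const.mul (continuousOn_fderiv_curvatureTerm_comp hjet hγpos _)
  · exact (continuousOn_hydrostaticTermDeriv_comp hR hρc hρθc hF.continuousOn Istrip_subset_Ioo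
      hγ.continuous.continuousOn hγpos).sub
      (continuousOn_const.mul (continuousOn_fderiv_curvatureTerm_comp hjet hγpos _))
  · intro θ hθ
    have := hγpos θ hθ
    positivity
  · intro h hh θ hθ
    convert tendsto_slope_FF σ b hR ha hρc hρθc hF.continuousOn hγ hh (Istrip_subset_Ioo hθ)
      (hγpos θ hθ) using 2
    rw [ContinuousLinearMap.apply_mk_eq_sum, fderiv_curvatureTerm_apply_w (hγpos θ hθ)]
    simp only [smul_eq_mul, zero_mul, zero_add]
    ring

/-- The Gateaux derivative of the Bernoulli functional `𝔽` in its first argument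
at `(γ, ℘_γ)` is the second-order differential operator
`h ↦ τ₁·h'' + τ₂·h' + τ₃·h`, where
`τ₁ = (σ/(R·P_atm))·(1+γ)/((1+γ)² + γ'²)^{3/2} > 0` and `τ₂, τ₃` are continuous
on `I` and independent of `h`. -/
theorem gateaux_derivative_of_bernoulli_functional
    (g R σ Patm a b : ℝ)
    (hg : 0 < g) (hR : 0 < R) (hσ : 0 < σ) (hP : 0 < Patm) (ha : 0 < a)
    (ρ ρθ : ℝ → ℝ → ℝ)
    (hρ : ContDiffOn ℝ 2 (fun q : ℝ × ℝ => ρ q.1 q.2)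
      (Set.Ioi 0 ×ˢ Set.Ioo 0 Real.pi))
    (hρθ : ∀ r ∈ Set.Ioi (0:ℝ), ∀ t ∈ Set.Ioo 0 Real.pi,
      HasDerivAt (fun u => ρ r u) (ρθ r t) t)
    (F : ℝ → ℝ) (hF : ContDiffOn ℝ 1 F (Set.Ioi 0))
    (γ : ℝ → ℝ) (hγ : ContDiff ℝ 2 γ)
    (hγpos : ∀ θ ∈ Istrip, 0 < 1 + γ θ)
    (℘γ : ℝ → ℝ) (h℘cont : ContinuousOn ℘γ Istrip)
    (h℘ : ∀ θ ∈ Istrip, FF g R σ Patm a b ρ ρθ F γ ℘γ θ = 0) :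
    ∃ τ₂ τ₃ : ℝ → ℝ, ContinuousOn τ₂ Istrip ∧ ContinuousOn τ₃ Istrip ∧
      (∀ θ ∈ Istrip,
        0 < σ / (R * Patm) * (1 + γ θ) /
          (((1 + γ θ)^2 + (deriv γ θ)^2) ^ ((3:ℝ)/2))) ∧
      (∀ h : ℝ → ℝ, ContDiff ℝ 2 h → ∀ θ ∈ Istrip,
        Filter.Tendsto
          (fun t : ℝ =>
            (FF g R σ Patm a b ρ ρθ F (fun x => γ x + t * h x) ℘γ θ
              - FF g R σ Patm a b ρ ρθ F γ ℘γ θ) / t)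
          (nhdsWithin (0:ℝ) {(0:ℝ)}ᶜ)
          (nhds (σ / (R * Patm) * (1 + γ θ) /
              (((1 + γ θ)^2 + (deriv γ θ)^2) ^ ((3:ℝ)/2)) * deriv (deriv h) θ
            + τ₂ θ * deriv h θ + τ₃ θ * h θ))) :=
  gateaux_derivative_of_bernoulli_functional_general g R σ Patm a b hR hσ hP ha ρ ρθ hρ hρθ F hF γ
    hγ hγpos ℘γ
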